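/- Let L be a divisorial principally generated C-lattice lattice domain. Then for every nonzero a ∈ L, the set of maximal elements of L that are above a is finite. -/

import Mathlib

/-!
Fix a nonzero principal `x ≤ a`; it suffices that only finitely many maximal elements lie above
`x`. For such an `m`, divisoriality gives `(x : (x : m)) = m ≠ 1`, so `(x : m) ≰ x` and there is a
principal `y_m ≤ (x : m)` with `(x : y_m) = m`. If there were infinitely many such `m`, compactness
of `1` would give one of them, `k`, lying above `⋀_{m ≠ k} m`. The element
`b = x ∨ ⋁_{m ≠ k} y_m` has `(x : b) = ⋀_{m ≠ k} m`, so divisoriality of `b` gives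
`y_k ≤ (x : (x : b)) = b`. Nonzero principal elements are compact, hence `y_k` lies below `x`
joined with finitely many `y_m`, and then `k = (x : y_k)` lies above a finite meet of maximal
elements different from `k`, which is impossible for a prime.
-/

/-- A multiplicative lattice: a complete lattice (bottom `⊥` playing the role of `0`)
which is a commutative monoid whose identity `1` is the top element, and in which
multiplication distributes over arbitrary joins. -/
class MulLattice (L : Type*) extends CompleteLattice L, CommMonoid L where
  one_eq_top : (1 : L) = ⊤
  mul_sSup : ∀ (a : L) (S : Set L), a * sSup S = ⨆ b ∈ S, a * b

namespace MulLattice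

variable {L : Type*} [MulLattice L]

/-- The residual `(y : x) = ⋁ {a | a * x ≤ y}`. -/
def res (y x : L) : L := sSup {a : L | a * x ≤ y}

/-- `x` is meet-principal: `y ⊓ z * x = ((y : x) ⊓ z) * x` for all `y, z`. -/
def IsMeetPrincipal (x : L) : Prop := ∀ y z : L, y ⊓ z * x = (res y x ⊓ z) * x

/-- `x` is join-principal: `y ⊔ (z : x) = ((y * x ⊔ z) : x)` for all `y, z`. -/
def IsJoinPrincipal (x : L) : Prop := ∀ y z : L, y ⊔ res z x = res (y * x ⊔ z) x

/-- `x` is principal if it is both meet-principal and join-principal. -/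
def IsPrincipal (x : L) : Prop := IsMeetPrincipal x ∧ IsJoinPrincipal x

/-- A prime element: a proper element `p` with `x * y ≤ p → x ≤ p ∨ y ≤ p`. -/
def IsPrime (p : L) : Prop := p ≠ 1 ∧ ∀ x y : L, x * y ≤ p → x ≤ p ∨ y ≤ p

/-- A maximal element: an element maximal in `L - {1}`. -/
def IsMaximal (m : L) : Prop := m ≠ 1 ∧ ∀ b : L, m < b → b = 1

end MulLattice

/-- A principally generated C-lattice: a multiplicative lattice in which `1` is compact,
compact elements are closed under multiplication, every element is a join of compact
elements and every element is a join of principal elements. -/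
class PGCLattice (L : Type*) extends MulLattice L where
  top_isCompact : IsCompactElement (⊤ : L)
  compact_mul : ∀ a b : L, IsCompactElement a →
    IsCompactElement b → IsCompactElement (a * b)
  compactly_generated : ∀ a : L,
    a = sSup {c : L | IsCompactElement c ∧ c ≤ a}
  principally_generated : ∀ a : L,
    a = sSup {x : L | MulLattice.IsPrincipal x ∧ x ≤ a}

namespace MulLattice

variable {L : Type*}

/-- A lattice domain: `0 = ⊥` is a prime element. -/
def IsLatticeDomain (L : Type*) [MulLattice L] : Prop := IsPrime (⊥ : L)

variable [PGCLattice L]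

open Classical in
/-- The divisorial (`v`-)closure of `a`: equals `(x : (x : a))` for a nonzero principal
`x ≤ a` when such an `x` exists (in a lattice domain this is independent of the choice
of `x`), and `⊥` otherwise (in particular `vclos ⊥ = ⊥`). -/
noncomputable def vclos (a : L) : L :=
  if h : ∃ x : L, IsPrincipal x ∧ x ≠ ⊥ ∧ x ≤ a then
    res h.choose (res h.choose a)
  else ⊥

/-- `a` is divisorial if `a = a_v`. -/
def IsDivisorial (a : L) : Prop := vclos a = a

/-- `L` is h-local: every nonzero prime is below a unique maximal element and
every nonzero element is below only finitely many maximal elements. -/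
def IsHLocal (L : Type*) [PGCLattice L] : Prop :=
  (∀ r : L, r ≠ ⊥ → IsPrime r → ∃! m : L, IsMaximal m ∧ r ≤ m) ∧
  (∀ b : L, b ≠ ⊥ → {m : L | IsMaximal m ∧ b ≤ m}.Finite)

end MulLattice

open MulLattice

namespace MulLattice

section Residuation

variable {L : Type*} [MulLattice L]

instance : IsQuantale L where
  mul_sSup_distrib := mul_sSup
  sSup_mul_distrib s y := by simp only [mul_comm _ y]; exact mul_sSup y s

lemma le_one (a : L) : a ≤ 1 := one_eq_top (L := L) ▸ le_top

lemma one_le_iff_eq {a : L} : 1 ≤ a ↔ a = 1 := by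
  rw [one_eq_top]; exact top_le_iff

lemma mul_le_right (a b : L) : a * b ≤ b := mul_le_of_le_one_left' (le_one a)

lemma le_res_iff {t u v : L} : t ≤ res u v ↔ t * v ≤ u :=
  Quantale.leftMulResiduation_le_iff_mul_le

lemma res_mul_le (u v : L) : res u v * v ≤ u := le_res_iff.1 le_rfl

lemma res_anti {u v v' : L} (h : v ≤ v') : res u v' ≤ res u v :=
  le_res_iff.2 ((mul_le_mul_right h _).trans (res_mul_le u v'))

lemma res_mono {u u' : L} (h : u ≤ u') (v : L) : res u v ≤ res u' v :=
  le_res_iff.2 ((res_mul_le u v).trans h)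

lemma res_self (u : L) : res u u = 1 :=
  one_le_iff_eq.1 (le_res_iff.2 (one_mul u).le)

lemma res_mul (u v w : L) : res u (v * w) = res (res u w) v := by
  refine le_antisymm ?_ ?_
  · rw [le_res_iff, le_res_iff, mul_assoc]
    exact res_mul_le _ _
  · rw [le_res_iff, ← mul_assoc]
    exact (mul_le_mul_left (res_mul_le _ _) w).trans (res_mul_le _ _)

lemma res_sSup (u : L) (S : Set L) : res u (sSup S) = ⨅ s ∈ S, res u s := by
  refine le_antisymm (le_iInf₂ fun s hs => res_anti (le_sSup hs)) ?_
  rw [le_res_iff, mul_sSup_distrib]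
  exact iSup₂_le fun s hs => (mul_le_mul_left (iInf₂_le s hs) s).trans (res_mul_le u s)

lemma res_finset_sup (u : L) (T : Finset L) : res u (T.sup id) = T.inf (res u) := by
  rw [Finset.sup_id_eq_sSup, res_sSup, Finset.inf_eq_iInf]
  rfl

lemma IsMeetPrincipal.inf_eq {p : L} (hp : IsMeetPrincipal p) (d : L) :
    d ⊓ p = res d p * p := by
  have h := hp d 1
  rwa [one_mul, one_eq_top, inf_top_eq] at h

lemma IsMeetPrincipal.res_mul_eq {p t : L} (hp : IsMeetPrincipal p) (ht : t ≤ p) :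
    res t p * p = t := by
  rw [← hp.inf_eq, inf_eq_left.2 ht]

lemma IsMaximal.eq_of_le {m k : L} (hm : IsMaximal m) (hk : k ≠ 1) (h : m ≤ k) : m = k :=
  h.eq_or_lt.resolve_right fun hlt => hk (hm.2 k hlt)

lemma IsMaximal.isPrime {m : L} (hm : IsMaximal m) : IsPrime m := by
  refine ⟨hm.1, fun s t hst => or_iff_not_imp_left.2 fun hs => ?_⟩
  have hms : m ⊔ s = 1 := hm.2 _ (left_lt_sup.2 hs)
  calc t = t * m ⊔ t * s := by rw [← Quantale.mul_sup_distrib, hms, mul_one]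
    _ ≤ m := sup_le (mul_le_right t m) (mul_comm s t ▸ hst)

lemma IsPrime.exists_le_of_inf_le {p : L} (hp : IsPrime p) {ι : Type*} (T : Finset ι)
    (f : ι → L) (h : T.inf f ≤ p) : ∃ i ∈ T, f i ≤ p := by
  classical
  induction T using Finset.induction_on with
  | empty => exact absurd (one_le_iff_eq.1 (by simpa [← one_eq_top] using h)) hp.1
  | insert i T hi ih =>
    rw [Finset.inf_insert] at h
    have hprod : f i * T.inf f ≤ p :=
      (le_inf (mul_le_of_le_one_right' (le_one _)) (mul_le_right _ _)).trans h
    rcases hp.2 _ _ hprod with hip | hTp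
    · exact ⟨i, Finset.mem_insert_self i T, hip⟩
    · obtain ⟨j, hj, hjp⟩ := ih hTp
      exact ⟨j, Finset.mem_insert_of_mem hj, hjp⟩

end Residuation

section Domain

variable {L : Type*} [MulLattice L] (hL : IsLatticeDomain L)
include hL

lemma res_bot_eq_bot {p : L} (hp0 : p ≠ ⊥) : res ⊥ p = ⊥ :=
  le_bot_iff.1 <| sSup_le fun t ht => (hL.2 t p ht).resolve_right (hp0 ∘ le_bot_iff.1)

lemma IsJoinPrincipal.res_mul_cancel {p : L} (hp : IsJoinPrincipal p) (hp0 : p ≠ ⊥) (z : L) :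
    res (z * p) p = z := by
  simpa [res_bot_eq_bot hL hp0] using (hp z ⊥).symm

lemma res_mul_principal {x c b : L} (hx : IsJoinPrincipal x) (hc : IsPrincipal c)
    (hx0 : x ≠ ⊥) (hc0 : c ≠ ⊥) (hxb : x ≤ b) : res (x * c) b = res x b * c := by
  refine le_antisymm ?_ (le_res_iff.2 ?_)
  · have hle_c : res (x * c) b ≤ c :=
      (res_anti hxb).trans (mul_comm c x ▸ hx.res_mul_cancel hL hx0 c).le
    set s := res (res (x * c) b) c
    have hs : s * c = res (x * c) b := hc.1.res_mul_eq hle_c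
    have hsb : s * b ≤ x := by
      rw [← hc.2.res_mul_cancel hL hc0 x, le_res_iff, mul_right_comm, hs]
      exact res_mul_le _ _
    exact hs ▸ mul_le_mul_left (le_res_iff.2 hsb) c
  · rw [mul_right_comm]
    exact mul_le_mul_left (res_mul_le x b) c

/-- The `v`-closure `(x : (x : b))` does not depend on the nonzero principal `x ≤ b`. -/
lemma res_res_mul_principal {x c b : L} (hx : IsJoinPrincipal x) (hc : IsPrincipal c)
    (hx0 : x ≠ ⊥) (hc0 : c ≠ ⊥) (hxb : x ≤ b) :
    res (x * c) (res (x * c) b) = res x (res x b) := by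
  rw [res_mul_principal hL hx hc hx0 hc0 hxb, res_mul, hc.2.res_mul_cancel hL hc0]

end Domain

section PGC

open CompleteLattice

variable {L : Type*} [PGCLattice L]

lemma isCompactElement_one : IsCompactElement (1 : L) :=
  one_eq_top (L := L) ▸ PGCLattice.top_isCompact

lemma exists_isMaximal_le {b : L} (hb : b ≠ 1) : ∃ m, IsMaximal m ∧ b ≤ m := by
  have : IsCoatomic L := coatomic_of_top_compact PGCLattice.top_isCompact
  obtain h | ⟨m, hm, hbm⟩ := eq_top_or_exists_le_coatom b
  · exact absurd (h.trans one_eq_top.symm) hb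
  · exact ⟨m, ⟨one_eq_top (L := L) ▸ hm.1, fun c hc => one_eq_top (L := L) ▸ hm.2 c hc⟩, hbm⟩

lemma exists_isPrincipal_le_not_le {b c : L} (h : ¬b ≤ c) :
    ∃ y, IsPrincipal y ∧ y ≤ b ∧ ¬y ≤ c := by
  by_contra! hall
  rw [PGCLattice.principally_generated b] at h
  exact h (sSup_le fun y ⟨hy, hyb⟩ => hall y hy hyb)

lemma IsPrincipal.isCompactElement (hL : IsLatticeDomain L) {p : L} (hp : IsPrincipal p)
    (hp0 : p ≠ ⊥) : IsCompactElement p := by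
  rw [isCompactElement_iff_le_of_directed_sSup_le]
  intro D hDne hD hpD
  -- each compact `c ≤ p` lies below some `d ∈ D`, hence below `d ⊓ p = (d : p) * p`
  have hcover : p ≤ (⨆ d ∈ D, res d p) * p := by
    refine (PGCLattice.compactly_generated p).trans_le (sSup_le fun c ⟨hc, hcp⟩ => ?_)
    obtain ⟨d, hdD, hcd⟩ :=
      (isCompactElement_iff_le_of_directed_sSup_le _ c).1 hc D hDne hD (hcp.trans hpD)
    calc c ≤ d ⊓ p := le_inf hcd hcp
      _ = res d p * p := hp.1.inf_eq d
      _ ≤ (⨆ d ∈ D, res d p) * p :=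
        mul_le_mul_left (le_iSup₂ (f := fun d _ => res d p) d hdD) p
  have hone : 1 ≤ sSup ((res · p) '' D) := by
    have := res_mono hcover p
    rwa [res_self, hp.2.res_mul_cancel hL hp0, ← sSup_image] at this
  obtain ⟨_, ⟨d, hdD, rfl⟩, hd⟩ := (isCompactElement_iff_le_of_directed_sSup_le _ 1).1
    isCompactElement_one _ (hDne.image _) (hD.mono_comp fun _ _ h => res_mono h p) hone
  exact ⟨d, hdD, by simpa using le_res_iff.1 hd⟩

lemma IsDivisorial.res_res_eq (hL : IsLatticeDomain L) {b x : L} (hb : IsDivisorial b)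
    (hx : IsPrincipal x) (hx0 : x ≠ ⊥) (hxb : x ≤ b) : res x (res x b) = b := by
  have hex : ∃ c : L, IsPrincipal c ∧ c ≠ ⊥ ∧ c ≤ b := ⟨x, hx, hx0, hxb⟩
  obtain ⟨hc, hc0, hcb⟩ := hex.choose_spec
  rw [IsDivisorial, vclos, dif_pos hex] at hb
  rw [← res_res_mul_principal hL hx.2 hc hx0 hc0 hxb, mul_comm,
    res_res_mul_principal hL hc.2 hx hc0 hx0 hcb, hb]

lemma exists_isPrincipal_res_eq (hL : IsLatticeDomain L) {m x : L} (hmdiv : IsDivisorial m)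
    (hm : IsMaximal m) (hx : IsPrincipal x) (hx0 : x ≠ ⊥) (hxm : x ≤ m) :
    ∃ y, IsPrincipal y ∧ res x y = m := by
  have hresm : ¬res x m ≤ x := fun h =>
    hm.1 (one_le_iff_eq.1 (hmdiv.res_res_eq hL hx hx0 hxm ▸ res_self x ▸ res_anti h))
  obtain ⟨y, hy, hym, hyx⟩ := exists_isPrincipal_le_not_le hresm
  refine ⟨y, hy, (hm.eq_of_le (fun h => hyx ?_) (le_res_iff.2 ?_)).symm⟩
  · simpa using le_res_iff.1 (one_le_iff_eq.2 h)
  · exact mul_comm y m ▸ le_res_iff.1 hym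

lemma exists_isMaximal_forall_sInf_diff_le {I : Set L} (hI : I.Infinite)
    (hImax : ∀ m ∈ I, IsMaximal m) : ∃ k, IsMaximal k ∧ ∀ m ∈ I, sInf (I \ {m}) ≤ k := by
  suffices hR : ⨆ m : I, sInf (I \ {(m : L)}) ≠ 1 by
    obtain ⟨k, hk, hRk⟩ := exists_isMaximal_le hR
    exact ⟨k, hk, fun m hm => (le_iSup (fun m : I => sInf (I \ {(m : L)})) ⟨m, hm⟩).trans hRk⟩
  intro hR
  obtain ⟨G, hG⟩ := IsCompactElement.exists_finset_of_le_iSup _ isCompactElement_one _ hR.ge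
  obtain ⟨k, hkI, hkG⟩ := (hI.sdiff (G.finite_toSet.image Subtype.val)).nonempty
  refine (hImax k hkI).1 (one_le_iff_eq.1 (hG.trans (iSup₂_le fun m hm => sInf_le ⟨hkI, ?_⟩)))
  exact fun hkm => hkG ⟨m, hm, hkm.symm⟩

theorem setOf_isMaximal_le_finite_of_isPrincipal (hL : IsLatticeDomain L)
    (hdiv : ∀ a : L, IsDivisorial a) {x : L} (hx : IsPrincipal x) (hx0 : x ≠ ⊥) :
    {m : L | IsMaximal m ∧ x ≤ m}.Finite := by
  set I := {m : L | IsMaximal m ∧ x ≤ m}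
  by_contra hI
  choose! Y hY hYres using fun m (hm : m ∈ I) =>
    exists_isPrincipal_res_eq hL (hdiv m) hm.1 hx hx0 hm.2
  obtain ⟨k, hk, hIk⟩ := exists_isMaximal_forall_sInf_diff_le hI fun m hm => hm.1
  obtain ⟨m₀, hm₀⟩ := Set.Infinite.nonempty hI
  have hkI : k ∈ I := ⟨hk, (le_sInf fun m hm => hm.1.2).trans (hIk m₀ hm₀)⟩
  set S := insert x (Y '' (I \ {k}))
  have hresS : res x (sSup S) = sInf (I \ {k}) := by
    rw [res_sSup, iInf_insert, res_self, iInf_image, sInf_eq_iInf, one_eq_top, top_inf_eq]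
    exact iInf_congr fun m => iInf_congr fun hm => hYres m hm.1
  have hYkS : Y k ≤ sSup S := by
    rw [← (hdiv (sSup S)).res_res_eq hL hx hx0 (le_sSup (Set.mem_insert x _)), hresS, le_res_iff]
    calc Y k * sInf (I \ {k}) ≤ Y k * k := mul_le_mul_right (hIk k hkI) _
      _ ≤ x := mul_comm k (Y k) ▸ le_res_iff.1 (hYres k hkI).ge
  have hYk0 : Y k ≠ ⊥ := fun h => hk.1 <| by
    rw [← hYres k hkI, h, ← one_le_iff_eq, le_res_iff, Quantale.mul_bot]
    exact bot_le
  obtain ⟨T, hTS, hYkT⟩ := (isCompactElement_iff_exists_le_sSup_of_le_sSup _ _).1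
    ((hY k hkI).isCompactElement hL hYk0) S hYkS
  have hTk : T.inf (res x) ≤ k := by
    rw [← res_finset_sup, ← hYres k hkI]
    exact res_anti hYkT
  obtain ⟨e, heT, hek⟩ := hk.isPrime.exists_le_of_inf_le T _ hTk
  obtain rfl | ⟨m, hm, rfl⟩ := hTS heT
  · exact hk.1 (one_le_iff_eq.1 (res_self e ▸ hek))
  · exact hm.2 (hm.1.1.eq_of_le hk.1 (hYres m hm.1 ▸ hek))

end PGC

end MulLattice

theorem stmt15 {L : Type*} [PGCLattice L] (hL : IsLatticeDomain L)
    (hdiv : ∀ a : L, IsDivisorial a)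
    (a : L) (ha : a ≠ ⊥) :
    {m : L | IsMaximal m ∧ a ≤ m}.Finite := by
  obtain ⟨x, hx, hxa, hx0⟩ := exists_isPrincipal_le_not_le (c := ⊥) (mt le_bot_iff.1 ha)
  exact (setOf_isMaximal_le_finite_of_isPrincipal hL hdiv hx fun h => hx0 h.le).subset
    fun m hm => ⟨hm.1, hxa.trans hm.2⟩
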